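/- arXiv:1706.03300 — 4 statements merged into one kernel-verified Lean document; each statement's English description precedes it below -/
import Mathlib

section
/- For every natural number n ≥ 1 and every real number x, the n-dimensional Lebesgue measure of the set {(x_1,…,x_n) ∈ [0,1)^n : x_1 + ⋯ + x_n ≤ x} equals U_n(x) := (1/n!) · Σ_{i=0}^{n} (-1)^i · C(n,i) · max(x − i, 0)^n. -/
open MeasureTheory Finset fwdDiff Filter Topology Asymptotics

/-! Slicing off the first coordinate gives `V (n + 1) x = ∫ t in x - 1..x, V n t` for the volume
`V n x`, and `V 1 x` is `x` clamped to `[0, 1]`. On the other side, `U_n(x)` is the `n`-th forward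
difference (step `1`, evaluated at `x - n`) of the truncated power `x₊ⁿ / n!`. Forward differences
commute with differentiation and `(x₊ⁿ⁺¹ / (n + 1)!)' = x₊ⁿ / n!` for `n ≥ 1`, so the fundamental
theorem of calculus gives `∫ t in x - 1..x, U_n t = U_{n+1}(x)`, and induction on `n ≥ 1`
finishes. -/

theorem hasDerivAt_max_zero_pow {m : ℕ} (hm : m ≠ 0) (t : ℝ) :
    HasDerivAt (fun s : ℝ => max s 0 ^ (m + 1)) ((m + 1) * max t 0 ^ m) t := by
  rcases lt_trichotomy t 0 with ht | rfl | ht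
  · have hzero : (fun s : ℝ => max s 0 ^ (m + 1)) =ᶠ[𝓝 t] fun _ => 0 := by
      filter_upwards [Iio_mem_nhds ht] with s hs
      simp [max_eq_right (Set.mem_Iio.mp hs).le]
    simpa [max_eq_right ht.le, hm] using (hasDerivAt_const t (0 : ℝ)).congr_of_eventuallyEq hzero
  · have hsmall : (fun s : ℝ => max s 0 ^ (m + 1)) =o[𝓝 0] fun s => s :=
      (IsBigO.of_bound 1 (Eventually.of_forall fun s => by
        simpa [abs_pow] using pow_le_pow_left₀ (abs_nonneg _) (abs_max_le_max_abs_abs.trans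
          (by simp)) (m + 1))).trans_isLittleO (isLittleO_pow_id (by omega))
    rw [hasDerivAt_iff_isLittleO_nhds_zero]
    simpa [hm] using hsmall
  · have hpos : (fun s : ℝ => max s 0 ^ (m + 1)) =ᶠ[𝓝 t] fun s => s ^ (m + 1) := by
      filter_upwards [Ioi_mem_nhds ht] with s hs
      rw [max_eq_left (Set.mem_Ioi.mp hs).le]
    simpa [max_eq_left ht.le] using (hasDerivAt_pow (m + 1) t).congr_of_eventuallyEq hpos

theorem hasDerivAt_fwdDiff_iter {𝕜 F : Type*} [NontriviallyNormedField 𝕜] [NormedAddCommGroup F]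
    [NormedSpace 𝕜 F] {f f' : 𝕜 → F} (hf : ∀ x, HasDerivAt f (f' x) x) (h : 𝕜) (n : ℕ) (x : 𝕜) :
    HasDerivAt ((Δ_[h])^[n] f) ((Δ_[h])^[n] f' x) x := by
  induction n generalizing f f' with
  | zero => exact hf x
  | succ n ih =>
    exact ih fun y => ((hf (y + h)).comp_add_const y h).sub (hf y)

theorem sum_range_neg_one_pow_mul_choose_mul_eq_fwdDiff_iter {R : Type*} [CommRing R] (f : R → R)
    (n : ℕ) (x : R) :
    ∑ i ∈ range (n + 1), (-1 : R) ^ i * (n.choose i : R) * f (x - i) = (Δ_[1])^[n] f (x - n) := by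
  rw [fwdDiff_iter_eq_sum_shift, ← sum_range_reflect]
  refine sum_congr rfl fun i hi => ?_
  have hin : i ≤ n := Nat.lt_succ_iff.mp (mem_range.mp hi)
  rw [Nat.add_sub_cancel, Nat.choose_symm hin, zsmul_eq_mul, nsmul_one, Nat.cast_sub hin,
    sub_sub_eq_add_sub, add_sub_right_comm]
  push_cast
  ring

noncomputable def truncPow (n : ℕ) (x : ℝ) : ℝ := max x 0 ^ n / n.factorial

theorem hasDerivAt_truncPow {n : ℕ} (hn : n ≠ 0) (x : ℝ) :
    HasDerivAt (truncPow (n + 1)) (truncPow n x) x := by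
  refine ((hasDerivAt_max_zero_pow hn x).div_const ((n + 1).factorial : ℝ)).congr_deriv ?_
  rw [truncPow, Nat.factorial_succ, Nat.cast_mul]
  field_simp
  push_cast
  ring

noncomputable def irwinHallCDF (n : ℕ) (x : ℝ) : ℝ :=
  (1 / (n.factorial : ℝ)) *
    ∑ i ∈ range (n + 1), (-1 : ℝ) ^ i * (n.choose i : ℝ) * max (x - (i : ℝ)) 0 ^ n

theorem irwinHallCDF_eq_fwdDiff_iter (n : ℕ) (x : ℝ) :
    irwinHallCDF n x = (Δ_[1])^[n] (truncPow n) (x - n) := by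
  rw [← sum_range_neg_one_pow_mul_choose_mul_eq_fwdDiff_iter, irwinHallCDF, mul_sum]
  refine sum_congr rfl fun i _ => ?_
  rw [truncPow]
  ring

theorem continuous_irwinHallCDF (n : ℕ) : Continuous (irwinHallCDF n) := by
  unfold irwinHallCDF
  fun_prop

theorem integral_irwinHallCDF {n : ℕ} (hn : n ≠ 0) (x : ℝ) :
    ∫ t in x - 1..x, irwinHallCDF n t = irwinHallCDF (n + 1) x := by
  have hderiv (t : ℝ) : HasDerivAt (fun s => (Δ_[1])^[n] (truncPow (n + 1)) (s - n))
      (irwinHallCDF n t) t := by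
    rw [irwinHallCDF_eq_fwdDiff_iter]
    exact (hasDerivAt_fwdDiff_iter (hasDerivAt_truncPow hn) 1 n (t - n)).comp_sub_const t n
  rw [intervalIntegral.integral_eq_sub_of_hasDerivAt (fun t _ => hderiv t)
    ((continuous_irwinHallCDF n).intervalIntegrable _ _), irwinHallCDF_eq_fwdDiff_iter,
    Function.iterate_succ_apply', fwdDiff, Nat.cast_succ, ← sub_sub, sub_add_cancel, sub_right_comm]

theorem irwinHallCDF_one (x : ℝ) : irwinHallCDF 1 x = max (min 1 x) 0 := by
  have h : irwinHallCDF 1 x = max x 0 - max (x - 1) 0 := by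
    simp [irwinHallCDF, sum_range_succ, sub_eq_add_neg]
  grind

theorem irwinHallCDF_nonneg {n : ℕ} (hn : 1 ≤ n) (x : ℝ) : 0 ≤ irwinHallCDF n x := by
  induction n, hn using Nat.le_induction generalizing x with
  | base => exact irwinHallCDF_one x ▸ le_max_right _ _
  | succ n hn ih =>
    rw [← integral_irwinHallCDF (by omega)]
    exact intervalIntegral.integral_nonneg (by linarith) fun t _ => ih t

def unitCubeSumLE (n : ℕ) (x : ℝ) : Set (Fin n → ℝ) :=
  {y | (∀ i, 0 ≤ y i ∧ y i < 1) ∧ ∑ i, y i ≤ x}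

theorem measurableSet_unitCubeSumLE (n : ℕ) (x : ℝ) : MeasurableSet (unitCubeSumLE n x) := by
  unfold unitCubeSumLE
  measurability

theorem cons_mem_unitCubeSumLE {n : ℕ} {x t : ℝ} {z : Fin n → ℝ} :
    (Fin.cons t z : Fin (n + 1) → ℝ) ∈ unitCubeSumLE (n + 1) x ↔
      t ∈ Set.Ico 0 1 ∧ z ∈ unitCubeSumLE n (x - t) := by
  simp only [unitCubeSumLE, Set.mem_ofPred_eq, Fin.forall_fin_succ, Fin.sum_univ_succ,
    Fin.cons_zero, Fin.cons_succ, Set.mem_Ico, le_sub_iff_add_le']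
  tauto

theorem volume_unitCubeSumLE_succ (n : ℕ) (x : ℝ) :
    volume (unitCubeSumLE (n + 1) x) = ∫⁻ t in Set.Ico 0 1, volume (unitCubeSumLE n (x - t)) := by
  let e := MeasurableEquiv.piFinSuccAbove (fun _ : Fin (n + 1) => ℝ) 0
  have hpre : e.symm ⁻¹' unitCubeSumLE (n + 1) x =
      {p : ℝ × (Fin n → ℝ) | p.1 ∈ Set.Ico 0 1 ∧ p.2 ∈ unitCubeSumLE n (x - p.1)} := by
    ext p
    simp [e, MeasurableEquiv.piFinSuccAbove_symm_apply, Fin.insertNthEquiv, cons_mem_unitCubeSumLE]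
  have hmeas : MeasurableSet (e.symm ⁻¹' unitCubeSumLE (n + 1) x) :=
    e.symm.measurable (measurableSet_unitCubeSumLE _ _)
  rw [← (volume_preserving_piFinSuccAbove (fun _ : Fin (n + 1) => ℝ) 0).symm.measure_preimage_equiv,
    Measure.volume_eq_prod, Measure.prod_apply hmeas, ← lintegral_indicator measurableSet_Ico]
  refine lintegral_congr fun t => ?_
  by_cases ht : t ∈ Set.Ico (0 : ℝ) 1
  · simp only [Set.indicator_of_mem ht, hpre, Set.preimage_ofPred_eq, ht, true_and,
      Set.ofPred_mem_eq]
  · simp only [Set.indicator_of_notMem ht, hpre, Set.preimage_ofPred_eq, ht, false_and,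
      Set.ofPred_false, measure_empty]

theorem volume_unitCubeSumLE_zero (x : ℝ) :
    volume (unitCubeSumLE 0 x) = (Set.Ici 0).indicator 1 x := by
  by_cases hx : 0 ≤ x <;> simp [unitCubeSumLE, hx, volume_pi]

theorem volume_unitCubeSumLE_one (x : ℝ) :
    volume (unitCubeSumLE 1 x) = ENNReal.ofReal (irwinHallCDF 1 x) := by
  have hslice (t : ℝ) : volume (unitCubeSumLE 0 (x - t)) = (Set.Iic x).indicator 1 t := by
    simp [volume_unitCubeSumLE_zero, Set.indicator_apply]
  simp_rw [volume_unitCubeSumLE_succ, hslice]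
  have hIio : (Set.Iic x ∩ Set.Ico 0 1 : Set ℝ) =ᵐ[volume] (Set.Iio x ∩ Set.Ico 0 1 : Set ℝ) :=
    Iio_ae_eq_Iic.symm.inter (ae_eq_refl _)
  rw [lintegral_indicator_one measurableSet_Iic, Measure.restrict_apply measurableSet_Iic,
    measure_congr hIio, Set.inter_comm, Set.Ico_inter_Iio, Real.volume_Ico, sub_zero,
    irwinHallCDF_one, ENNReal.ofReal_max, ENNReal.ofReal_zero, max_eq_left zero_le]

theorem volume_unitCubeSumLE {n : ℕ} (hn : 1 ≤ n) (x : ℝ) :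
    volume (unitCubeSumLE n x) = ENNReal.ofReal (irwinHallCDF n x) := by
  induction n, hn using Nat.le_induction generalizing x with
  | base => exact volume_unitCubeSumLE_one x
  | succ n hn ih =>
    have hint : IntegrableOn (fun t => irwinHallCDF n (x - t)) (Set.Ioc 0 1) :=
      ((continuous_irwinHallCDF n).comp (continuous_sub_left x)).integrableOn_Icc.mono_set
        Set.Ioc_subset_Icc_self
    simp_rw [volume_unitCubeSumLE_succ, ih, Measure.restrict_congr_set Ico_ae_eq_Ioc]
    rw [← ofReal_integral_eq_lintegral_ofReal hint
      (ae_of_all _ fun t => irwinHallCDF_nonneg hn (x - t)), ← intervalIntegral.integral_of_le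
      zero_le_one, intervalIntegral.integral_comp_sub_left (irwinHallCDF n), sub_zero,
      integral_irwinHallCDF (by omega)]

/-- For every natural number `n ≥ 1` and every real `x`, the Lebesgue measure
of `{(x_1,…,x_n) ∈ [0,1)^n : x_1 + ⋯ + x_n ≤ x}` equals
`U_n(x) = (1/n!) · Σ_{i=0}^{n} (-1)^i C(n,i) max(x − i, 0)^n`. -/
theorem statement0 (n : ℕ) (hn : 1 ≤ n) (x : ℝ) :
    volume {y : Fin n → ℝ | (∀ i, 0 ≤ y i ∧ y i < 1) ∧ ∑ i, y i ≤ x} =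
      ENNReal.ofReal ((1 / (n.factorial : ℝ)) *
        ∑ i ∈ Finset.range (n + 1),
          (-1 : ℝ) ^ i * (n.choose i : ℝ) * max (x - (i : ℝ)) 0 ^ n) :=
  volume_unitCubeSumLE hn x
end

section
/- For every integer n ≥ 2 and every real number a with 0 ≤ a < 1, one has the identity (1/(n−1)!) · Σ_{(i,k) ∈ ℤ², 0 ≤ i ≤ n, max(i·a, 1) ≤ k ≤ n−1} (−1)^i · C(n,i) · (k − i·a)^{n−1} = V^{1−a}, where V^b := (1/(n−1)!) · Σ_{(i,k) ∈ ℤ², 2 ≤ i ≤ n, max(i·b, i−n+1) ≤ k ≤ i−1} (−1)^{n+i} · C(n,i) · (k − i·b)^{n−1}. -/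
/-!
For each fixed `k`, the column sum `∑ i, (-1)^i C(n,i) (k - i a)^(n-1)` over `0 ≤ i ≤ n` vanishes:
it is, up to sign, the `n`-th forward difference of a polynomial of degree `n - 1`. Hence the sum
over the region `i a ≤ k` is minus the sum over the complementary region `k < i a`. That region is
empty for `i ∈ {0, 1}` because `a < 1 ≤ k`, its boundary `k = i a` contributes nothing because
`n ≥ 2`, and the substitution `k ↦ i - k` turns the sum over it into the one defining `V^{1-a}`.
-/

open Finset

/-- `V^b = (1/(n−1)!) · Σ_{(i,k) ∈ ℤ², 2 ≤ i ≤ n, max(i·b, i−n+1) ≤ k ≤ i−1}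
(−1)^{n+i} C(n,i) (k − i·b)^{n−1}`. -/
noncomputable def Vexp (n : ℕ) (b : ℝ) : ℝ :=
  (1 / ((n - 1).factorial : ℝ)) *
    ∑ i ∈ Finset.Icc (2 : ℤ) (n : ℤ),
      ∑ k ∈ (Finset.Icc (i - (n : ℤ) + 1) (i - 1)).filter (fun k : ℤ => (i : ℝ) * b ≤ (k : ℝ)),
        (-1 : ℝ) ^ ((n : ℤ) + i) * (n.choose i.toNat : ℝ) * ((k : ℝ) - (i : ℝ) * b) ^ (n - 1)

open Polynomial

theorem Int.sum_Icc_zero_eq_sum_range {M : Type*} [AddCommMonoid M] (f : ℤ → M) (n : ℕ) :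
    ∑ i ∈ Icc (0 : ℤ) n, f i = ∑ i ∈ Finset.range (n + 1), f i := by
  rw [Int.Icc_eq_finset_map, sum_map]
  simp

theorem Polynomial.sum_range_neg_one_pow_mul_choose_mul_eval_eq_zero {R : Type*} [CommRing R]
    {P : R[X]} {n : ℕ} (hP : P.natDegree < n) :
    ∑ i ∈ range (n + 1), (-1 : R) ^ i * n.choose i * P.eval (i : R) = 0 := by
  have h := congr_fun (fwdDiff_iter_eq_zero_of_degree_lt hP) 0
  rw [fwdDiff_iter_eq_sum_shift] at h
  calc _ = (-1) ^ n *
        ∑ i ∈ range (n + 1), ((-1 : ℤ) ^ (n - i) * n.choose i) • P.eval (0 + i • 1) := by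
        rw [mul_sum]
        refine sum_congr rfl fun i hi => ?_
        have hi : i ≤ n := Nat.lt_succ_iff.mp (mem_range.mp hi)
        have hsign : (-1 : R) ^ i = (-1) ^ n * (-1) ^ (n - i) := by
          rw [← pow_add, show n + (n - i) = i + 2 * (n - i) by omega, pow_add, pow_mul]
          simp
        simp [hsign, zsmul_eq_mul, mul_assoc]
    _ = 0 := by rw [h, Pi.zero_apply, mul_zero]

theorem sum_Icc_neg_one_zpow_mul_choose_mul_sub_mul_pow_eq_zero {K : Type*} [Field K] {n : ℕ}
    (hn : 1 ≤ n) (x a : K) :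
    ∑ i ∈ Icc (0 : ℤ) n, (-1 : K) ^ i * (n.choose i.toNat : K) * (x - i * a) ^ (n - 1) = 0 := by
  have hP : ((C x - X * C a) ^ (n - 1)).natDegree < n :=
    lt_of_le_of_lt (b := n - 1) (by compute_degree) (by omega)
  have h := sum_range_neg_one_pow_mul_choose_mul_eval_eq_zero hP
  simp only [eval_pow, eval_sub, eval_C, eval_mul, eval_X] at h
  rw [Int.sum_Icc_zero_eq_sum_range]
  simpa using h

theorem Finset.sum_sum_filter_eq_neg_sum_sum_filter_not {ι κ G : Type*} [AddCommGroup G]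
    (s : Finset ι) (t : Finset κ) (p : ι → κ → Prop) [∀ i k, Decidable (p i k)]
    (f : ι → κ → G) (h : ∀ k ∈ t, ∑ i ∈ s, f i k = 0) :
    ∑ i ∈ s, ∑ k ∈ t with p i k, f i k = -∑ i ∈ s, ∑ k ∈ t with ¬p i k, f i k := by
  refine eq_neg_of_add_eq_zero_left ?_
  rw [← sum_add_distrib]
  simp_rw [sum_filter_add_sum_filter_not]
  rw [sum_comm]
  exact sum_eq_zero h

theorem Vexp_one_sub {n : ℕ} (hn : 1 ≤ n) (a : ℝ) :
    Vexp n (1 - a) = -((1 / ((n - 1).factorial : ℝ)) *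
      ∑ i ∈ Icc (2 : ℤ) n, ∑ k ∈ (Icc (1 : ℤ) ((n : ℤ) - 1)).filter (fun k : ℤ => (k : ℝ) ≤ i * a),
        (-1 : ℝ) ^ i * (n.choose i.toNat : ℝ) * ((k : ℝ) - i * a) ^ (n - 1)) := by
  obtain ⟨m, rfl⟩ := Nat.exists_eq_add_of_le' hn
  rw [Vexp, ← mul_neg, ← sum_neg_distrib]
  congr 1
  refine sum_congr rfl fun i _ => ?_
  rw [← sum_neg_distrib]
  refine sum_nbij' (i - ·) (i - ·) (fun k hk => ?_) (fun k hk => ?_) (fun k _ => by simp)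
    (fun k _ => by simp) (fun k _ => ?_)
  · simp only [mem_filter, mem_Icc] at hk ⊢
    push_cast at hk ⊢
    exact ⟨by omega, by linarith⟩
  · simp only [mem_filter, mem_Icc] at hk ⊢
    push_cast at hk ⊢
    exact ⟨by omega, by linarith⟩
  · have hsign : (-1 : ℝ) ^ (m + 1) * (-1) ^ m = -1 := by
      rw [← pow_add]; exact Odd.neg_one_pow ⟨m, by ring⟩
    rw [zpow_add₀ (by norm_num), zpow_natCast, Nat.add_sub_cancel, Int.cast_sub,
      show (k : ℝ) - i * (1 - a) = -(i - k - i * a) by ring, neg_pow ((i : ℝ) - k - i * a)]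
    linear_combination (-1 : ℝ) ^ i * (m + 1).choose i.toNat * (i - k - i * a) ^ m * hsign

theorem sum_filter_not_le_eq_sum_filter_le {t : Finset ℤ} {c : ℝ} {m : ℕ} (hm : m ≠ 0)
    (g : ℤ → ℝ) :
    ∑ k ∈ t.filter (fun k : ℤ => ¬c ≤ k), g k * ((k : ℝ) - c) ^ m =
      ∑ k ∈ t.filter (fun k : ℤ => (k : ℝ) ≤ c), g k * ((k : ℝ) - c) ^ m := by
  refine sum_subset (monotone_filter_right _ fun k _ h => (lt_of_not_ge h).le) fun k hk hk' => ?_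
  simp only [mem_filter, not_and, not_not] at hk hk'
  rw [show (k : ℝ) - c = 0 by linarith [hk' hk.1], zero_pow hm, mul_zero]

theorem filter_Icc_one_le_eq_empty {c : ℝ} (hc : c < 1) (m : ℤ) :
    (Icc 1 m).filter (fun k : ℤ => (k : ℝ) ≤ c) = ∅ :=
  filter_eq_empty_iff.mpr fun k hk => not_le.mpr <|
    hc.trans_le (by exact_mod_cast (mem_Icc.mp hk).1)

theorem statement3_general (n : ℕ) (hn : 2 ≤ n) (a : ℝ) (ha1 : a < 1) :
    (1 / ((n - 1).factorial : ℝ)) *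
        ∑ i ∈ Finset.Icc (0 : ℤ) (n : ℤ),
          ∑ k ∈ (Finset.Icc (1 : ℤ) ((n : ℤ) - 1)).filter (fun k : ℤ => (i : ℝ) * a ≤ (k : ℝ)),
            (-1 : ℝ) ^ i * (n.choose i.toNat : ℝ) * ((k : ℝ) - (i : ℝ) * a) ^ (n - 1) =
      Vexp n (1 - a) := by
  have column_sum : ∀ k ∈ Icc (1 : ℤ) ((n : ℤ) - 1), ∑ i ∈ Icc (0 : ℤ) n,
      (-1 : ℝ) ^ i * (n.choose i.toNat : ℝ) * ((k : ℝ) - i * a) ^ (n - 1) = 0 :=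
    fun k _ => sum_Icc_neg_one_zpow_mul_choose_mul_sub_mul_pow_eq_zero (by omega) _ a
  rw [Vexp_one_sub (by omega), sum_sum_filter_eq_neg_sum_sum_filter_not _ _ _ _ column_sum,
    mul_neg, sum_congr rfl fun i _ => sum_filter_not_le_eq_sum_filter_le (by omega) _]
  congr 2
  refine (sum_subset (Icc_subset_Icc_left (by norm_num)) fun i hi hi2 => ?_).symm
  have hia : (i : ℝ) * a < 1 := by
    obtain rfl | rfl : i = 0 ∨ i = 1 := by simp only [mem_Icc] at hi hi2; omega
    · simp
    · simpa using ha1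
  rw [filter_Icc_one_le_eq_empty hia, sum_empty]

/-- for `n ≥ 2` and `0 ≤ a < 1`,
`(1/(n−1)!) Σ_{0 ≤ i ≤ n, max(i·a,1) ≤ k ≤ n−1} (−1)^i C(n,i) (k − i·a)^{n−1} = V^{1−a}`. -/
theorem statement3 (n : ℕ) (hn : 2 ≤ n) (a : ℝ) (ha0 : 0 ≤ a) (ha1 : a < 1) :
    (1 / ((n - 1).factorial : ℝ)) *
        ∑ i ∈ Finset.Icc (0 : ℤ) (n : ℤ),
          ∑ k ∈ (Finset.Icc (1 : ℤ) ((n : ℤ) - 1)).filter (fun k : ℤ => (i : ℝ) * a ≤ (k : ℝ)),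
            (-1 : ℝ) ^ i * (n.choose i.toNat : ℝ) * ((k : ℝ) - (i : ℝ) * a) ^ (n - 1) =
      Vexp n (1 - a) :=
  statement3_general n hn a ha1
end

section
/- Let n ≥ 2, let 0 ≤ a < 1, and let k be an integer with 1 ≤ k ≤ n−1. Then the (n−1)-dimensional Lebesgue measure of the set {(x_1,…,x_{n−1}) ∈ [a,1)^{n−1} : k − 1 < x_1 + ⋯ + x_{n−1} ≤ k − a} equals (1−a)^{n−1} · ( U_{n−1}((k − n·a)/(1−a)) − U_{n−1}((k − n·a)/(1−a) − 1) ). -/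
open MeasureTheory Finset

/-- `U_m(x) = (1/m!) · Σ_{i=0}^{m} (−1)^i C(m,i) max(x − i, 0)^m`. -/
noncomputable def Ufun (m : ℕ) (x : ℝ) : ℝ :=
  (1 / (m.factorial : ℝ)) *
    ∑ i ∈ Finset.range (m + 1), (-1 : ℝ) ^ i * (m.choose i : ℝ) * max (x - (i : ℝ)) 0 ^ m

/-!
`U_m` is the Irwin–Hall distribution function: `vol {y ∈ [0,1)^m : ∑ y_i ≤ x} = U_m(x)` for
`m ≥ 1`. Cutting off the first coordinate gives `vol_{m+1}(x) = ∫₀¹ vol_m(x - s) ds`, and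
`U_{m+1}(x) = ∫₀¹ U_m(x - s) ds` holds as well: integrating the truncated powers
`max(x - i, 0)^m` and regrouping by Pascal's rule. Hence the slab `x - 1 < ∑ y_i ≤ x` has
volume `U_m(x) - U_m(x - 1)`. The set of the theorem is the image of such a slab, with
`x = (k - n a)/(1 - a)`, under `y ↦ a + (1 - a) y`, which multiplies volumes by `(1 - a)^(n-1)`.
-/

open Set

lemma hasDerivAt_max_sub_pow {m : ℕ} (hm : m ≠ 0) (c x : ℝ) :
    HasDerivAt (fun y => max (y - c) 0 ^ (m + 1)) ((m + 1) * max (x - c) 0 ^ m) x := by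
  set f := fun y : ℝ => max (y - c) 0 ^ (m + 1)
  have left : ∀ x ≤ c, HasDerivWithinAt f ((m + 1) * max (x - c) 0 ^ m) (Iic c) x := by
    intro x hx
    have hf : ∀ y ∈ Iic c, f y = 0 := fun y hy => by
      simp [f, max_eq_right (sub_nonpos.2 (mem_Iic.1 hy))]
    rw [max_eq_right (sub_nonpos.2 hx), zero_pow hm, mul_zero]
    exact (hasDerivWithinAt_const x _ 0).congr hf (hf x hx)
  have right : ∀ x ≥ c, HasDerivWithinAt f ((m + 1) * max (x - c) 0 ^ m) (Ici c) x := by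
    intro x hx
    have hf : ∀ y ∈ Ici c, f y = (y - c) ^ (m + 1) := fun y hy => by
      simp [f, max_eq_left (sub_nonneg.2 (mem_Ici.1 hy))]
    rw [max_eq_left (sub_nonneg.2 hx)]
    simpa using (((hasDerivAt_id x).sub_const c).pow (m + 1)).hasDerivWithinAt.congr_of_mem hf hx
  rcases lt_trichotomy x c with h | rfl | h
  · exact (left x h.le).hasDerivAt (Iic_mem_nhds h)
  · simpa [Iic_union_Ici] using (left x le_rfl).union (right x le_rfl)
  · exact (right x h.le).hasDerivAt (Ici_mem_nhds h)

noncomputable def antiderivUfun (m : ℕ) (x : ℝ) : ℝ :=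
  (1 / ((m + 1).factorial : ℝ)) *
    ∑ i ∈ range (m + 1), (-1 : ℝ) ^ i * (m.choose i : ℝ) * max (x - i) 0 ^ (m + 1)

lemma hasDerivAt_antiderivUfun {m : ℕ} (hm : m ≠ 0) (x : ℝ) :
    HasDerivAt (antiderivUfun m) (Ufun m x) x := by
  have h : HasDerivAt (antiderivUfun m) _ x :=
    (HasDerivAt.fun_sum (u := range (m + 1)) fun i _ =>
      (hasDerivAt_max_sub_pow hm i x).const_mul ((-1 : ℝ) ^ i * (m.choose i : ℝ))).const_mul
        (1 / ((m + 1).factorial : ℝ))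
  refine h.congr_deriv ?_
  rw [Ufun, mul_sum, mul_sum]
  refine sum_congr rfl fun i _ => ?_
  rw [Nat.factorial_succ]
  push_cast
  field_simp

lemma antiderivUfun_sub_antiderivUfun_sub_one (m : ℕ) (x : ℝ) :
    antiderivUfun m x - antiderivUfun m (x - 1) = Ufun (m + 1) x := by
  have pascal := sum_choose_succ_mul (R := ℝ)
    (fun i _ => (-1 : ℝ) ^ i * max (x - i) 0 ^ (m + 1)) m
  have shift : ∀ i : ℕ, (-1 : ℝ) ^ (i + 1) * max (x - (i + 1 : ℕ)) 0 ^ (m + 1) =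
      -((-1 : ℝ) ^ i * max (x - 1 - i) 0 ^ (m + 1)) := fun i => by
    push_cast; ring_nf
  simp only [shift, mul_neg, sum_neg_distrib, ← sub_eq_add_neg] at pascal
  simp only [antiderivUfun, Ufun, ← mul_sub]
  congr 1
  convert pascal.symm using 2 <;> (try apply sum_congr rfl; intro i _) <;> ring

lemma continuous_Ufun (m : ℕ) : Continuous (Ufun m) := by
  unfold Ufun
  fun_prop

lemma integral_Ufun_sub {m : ℕ} (hm : m ≠ 0) (x : ℝ) :
    ∫ s in (0 : ℝ)..1, Ufun m (x - s) = Ufun (m + 1) x := by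
  rw [intervalIntegral.integral_comp_sub_left, sub_zero,
    intervalIntegral.integral_eq_sub_of_hasDerivAt (fun y _ => hasDerivAt_antiderivUfun hm y)
      ((continuous_Ufun m).intervalIntegrable _ _),
    antiderivUfun_sub_antiderivUfun_sub_one]

lemma Ufun_one (x : ℝ) : Ufun 1 x = max (min x 1) 0 := by
  have h : Ufun 1 x = max x 0 - max (x - 1) 0 := by simp [Ufun, sum_range_succ, sub_eq_add_neg]
  grind

lemma Ufun_nonneg {m : ℕ} (hm : m ≠ 0) (x : ℝ) : 0 ≤ Ufun m x := by
  induction m, Nat.one_le_iff_ne_zero.2 hm using Nat.le_induction generalizing x with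
  | base => exact Ufun_one x ▸ le_max_right _ _
  | succ m hm ih =>
    rw [← integral_Ufun_sub (by omega)]
    exact intervalIntegral.integral_nonneg zero_le_one fun s _ => ih (by omega) _

def boxSlice (m : ℕ) (a b : ℝ) (s : Set ℝ) : Set (Fin m → ℝ) :=
  {x | (∀ i, x i ∈ Ico a b) ∧ ∑ i, x i ∈ s}

lemma measurableSet_boxSlice (m : ℕ) (a b : ℝ) {s : Set ℝ} (hs : MeasurableSet s) :
    MeasurableSet (boxSlice m a b s) := by
  unfold boxSlice
  measurability

lemma boxSlice_sdiff (m : ℕ) (a b : ℝ) (s t : Set ℝ) :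
    boxSlice m a b (t \ s) = boxSlice m a b t \ boxSlice m a b s := by
  ext x
  simp only [boxSlice, mem_sdiff, mem_ofPred_eq]
  tauto

lemma boxSlice_mono (m : ℕ) (a b : ℝ) {s t : Set ℝ} (hst : s ⊆ t) :
    boxSlice m a b s ⊆ boxSlice m a b t :=
  fun _ hx => ⟨hx.1, hst hx.2⟩

lemma cons_mem_boxSlice {m : ℕ} {a b : ℝ} {s : Set ℝ} (u : ℝ) (y : Fin m → ℝ) :
    Fin.cons u y ∈ boxSlice (m + 1) a b s ↔
      u ∈ Ico a b ∧ y ∈ boxSlice m a b ((u + ·) ⁻¹' s) := by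
  simp only [boxSlice, mem_ofPred_eq, Fin.forall_fin_succ, Fin.cons_zero, Fin.cons_succ,
    Fin.sum_cons, Set.mem_preimage, and_assoc]

lemma volume_boxSlice_succ (m : ℕ) (a b : ℝ) {s : Set ℝ} (hs : MeasurableSet s) :
    volume (boxSlice (m + 1) a b s) =
      ∫⁻ u in Ico a b, volume (boxSlice m a b ((u + ·) ⁻¹' s)) := by
  set e := MeasurableEquiv.piFinSuccAbove (fun _ : Fin (m + 1) => ℝ) 0
  have he : MeasurePreserving e.symm (volume.prod volume) volume :=
    (volume_preserving_piFinSuccAbove (fun _ : Fin (m + 1) => ℝ) 0).symm e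
  have hmeas := measurableSet_boxSlice (m + 1) a b hs
  have hsection : ∀ u, volume (Prod.mk u ⁻¹' (e.symm ⁻¹' boxSlice (m + 1) a b s)) =
      (Ico a b).indicator (fun u => volume (boxSlice m a b ((u + ·) ⁻¹' s))) u := by
    intro u
    have : Prod.mk u ⁻¹' (e.symm ⁻¹' boxSlice (m + 1) a b s) =
        {y | Fin.cons u y ∈ boxSlice (m + 1) a b s} := by
      ext y
      simp only [e, MeasurableEquiv.piFinSuccAbove_symm_apply, Fin.insertNthEquiv_zero,
        Set.mem_preimage, mem_ofPred_eq]
      rfl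
    by_cases hu : u ∈ Ico a b <;> simp [this, cons_mem_boxSlice, hu]
  rw [← he.measure_preimage hmeas.nullMeasurableSet,
    Measure.prod_apply (hmeas.preimage e.symm.measurable), lintegral_congr hsection,
    lintegral_indicator measurableSet_Ico]

lemma volume_boxSlice_one_Iic (x : ℝ) :
    volume (boxSlice 1 0 1 (Iic x)) = ENNReal.ofReal (Ufun 1 x) := by
  have hpre : boxSlice 1 0 1 (Iic x) =
      MeasurableEquiv.funUnique (Fin 1) ℝ ⁻¹' (Ico 0 1 ∩ Iic x) := by
    ext y
    simp [boxSlice, Fin.forall_fin_one]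
  rw [hpre]
  refine ((volume_preserving_funUnique (Fin 1) ℝ).measure_preimage
    (measurableSet_Ico.inter measurableSet_Iic).nullMeasurableSet).trans ?_
  rw [measure_congr ((Ico_ae_eq_Ioc (μ := volume)).inter (ae_eq_refl (Iic x))), Ioc_inter_Iic,
    Real.volume_Ioc, Ufun_one, ENNReal.ofReal_max, sub_zero, min_comm]
  simp

lemma volume_boxSlice_Iic {m : ℕ} (hm : m ≠ 0) (x : ℝ) :
    volume (boxSlice m 0 1 (Iic x)) = ENNReal.ofReal (Ufun m x) := by
  induction m, Nat.one_le_iff_ne_zero.2 hm using Nat.le_induction generalizing x with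
  | base => exact volume_boxSlice_one_Iic x
  | succ m hm ih =>
    have hm : m ≠ 0 := by omega
    have hint : IntegrableOn (fun u => Ufun m (x - u)) (Ioc 0 1) :=
      ((continuous_Ufun m).comp (continuous_sub_left x)).integrableOn_Ioc
    simp_rw [volume_boxSlice_succ m 0 1 measurableSet_Iic, preimage_const_add_Iic, ih hm]
    rw [Measure.restrict_congr_set Ico_ae_eq_Ioc, ← ofReal_integral_eq_lintegral_ofReal hint
      (.of_forall fun u => Ufun_nonneg hm _), ← intervalIntegral.integral_of_le zero_le_one,
      integral_Ufun_sub hm]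

lemma volume_boxSlice_Ioc {m : ℕ} (hm : m ≠ 0) {x y : ℝ} (hxy : x ≤ y) :
    volume (boxSlice m 0 1 (Ioc x y)) = ENNReal.ofReal (Ufun m y - Ufun m x) := by
  rw [← Iic_sdiff_Iic, boxSlice_sdiff,
    measure_sdiff (boxSlice_mono m 0 1 (Set.Iic_subset_Iic.2 hxy))
      (measurableSet_boxSlice m 0 1 measurableSet_Iic).nullMeasurableSet
      (by simp [volume_boxSlice_Iic hm]),
    volume_boxSlice_Iic hm, volume_boxSlice_Iic hm, ENNReal.ofReal_sub _ (Ufun_nonneg hm x)]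

lemma volume_boxSlice_eq_ofReal_mul (m : ℕ) {a b : ℝ} (hab : a < b) (s : Set ℝ) :
    volume (boxSlice m a b s) = ENNReal.ofReal ((b - a) ^ m) *
      volume (boxSlice m 0 1 ((fun u => m * a + (b - a) * u) ⁻¹' s)) := by
  have hr : 0 < b - a := sub_pos.2 hab
  have hpre : boxSlice m a b s = (· + -fun _ => a) ⁻¹'
      (((b - a)⁻¹ • ·) ⁻¹' boxSlice m 0 1 ((fun u => m * a + (b - a) * u) ⁻¹' s)) := by
    ext x
    have hsum : m * a + (b - a) * ∑ i, (b - a)⁻¹ * (x i + -a) = ∑ i, x i := by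
      rw [← mul_sum, ← mul_assoc, mul_inv_cancel₀ hr.ne', one_mul, sum_add_distrib]
      simp
    simp only [boxSlice, Set.mem_preimage, mem_ofPred_eq, Pi.smul_apply, Pi.add_apply,
      Pi.neg_apply, smul_eq_mul, hsum, Set.mem_Ico]
    refine and_congr_left' (forall_congr' fun i => ?_)
    rw [inv_mul_eq_div, le_div_iff₀ hr, div_lt_one hr]
    constructor <;> rintro ⟨h₁, h₂⟩ <;> constructor <;> linarith
  rw [hpre, measure_preimage_add_right, Measure.addHaar_preimage_smul _ (inv_ne_zero hr.ne'),
    Module.finrank_fin_fun, inv_pow, inv_inv, abs_of_pos (pow_pos hr m)]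

theorem statement4_general (n : ℕ) (hn : 2 ≤ n) (a : ℝ) (ha1 : a < 1) (k : ℤ) :
    volume {x : Fin (n - 1) → ℝ | (∀ i, a ≤ x i ∧ x i < 1) ∧
        (k : ℝ) - 1 < ∑ i, x i ∧ ∑ i, x i ≤ (k : ℝ) - a} =
      ENNReal.ofReal ((1 - a) ^ (n - 1) *
        (Ufun (n - 1) (((k : ℝ) - n * a) / (1 - a)) -
          Ufun (n - 1) (((k : ℝ) - n * a) / (1 - a) - 1))) := by
  obtain ⟨m, rfl⟩ : ∃ m, n = m + 1 := ⟨n - 1, by omega⟩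
  have hr : 0 < 1 - a := sub_pos.2 ha1
  set t := ((k : ℝ) - ((m + 1 : ℕ) : ℝ) * a) / (1 - a)
  have hpre : (fun u => m * a + (1 - a) * u) ⁻¹' Set.Ioc ((k : ℝ) - 1) (k - a) =
      Set.Ioc (t - 1) t := by
    change ((1 - a) * ·) ⁻¹' (((m : ℝ) * a + ·) ⁻¹' Set.Ioc ((k : ℝ) - 1) (k - a)) = _
    rw [Set.preimage_const_add_Ioc, Set.preimage_const_mul_Ioc₀ _ _ hr]
    simp only [t, div_sub_one hr.ne']
    congr 2 <;> push_cast <;> ring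
  calc _ = volume (boxSlice m a 1 (Set.Ioc ((k : ℝ) - 1) (k - a))) := rfl
    _ = ENNReal.ofReal ((1 - a) ^ m) * volume (boxSlice m 0 1 (Set.Ioc (t - 1) t)) := by
      rw [volume_boxSlice_eq_ofReal_mul m ha1, hpre]
    _ = _ := by
      rw [volume_boxSlice_Ioc (by omega) (by linarith), ← ENNReal.ofReal_mul (by positivity)]
      rfl

/-- for `n ≥ 2`, `0 ≤ a < 1` and an integer `1 ≤ k ≤ n−1`, the Lebesgue measure
of `{(x_1,…,x_{n−1}) ∈ [a,1)^{n−1} : k − 1 < Σ x_i ≤ k − a}` equals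
`(1−a)^{n−1} (U_{n−1}((k−na)/(1−a)) − U_{n−1}((k−na)/(1−a) − 1))`. -/
theorem statement4 (n : ℕ) (hn : 2 ≤ n) (a : ℝ) (ha0 : 0 ≤ a) (ha1 : a < 1)
    (k : ℤ) (hk1 : 1 ≤ k) (hkn : k ≤ (n : ℤ) - 1) :
    volume {x : Fin (n - 1) → ℝ | (∀ i, a ≤ x i ∧ x i < 1) ∧
        (k : ℝ) - 1 < ∑ i, x i ∧ ∑ i, x i ≤ (k : ℝ) - a} =
      ENNReal.ofReal ((1 - a) ^ (n - 1) *
        (Ufun (n - 1) (((k : ℝ) - n * a) / (1 - a)) -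
          Ufun (n - 1) (((k : ℝ) - n * a) / (1 - a) - 1))) :=
  statement4_general n hn a ha1 k
end

section
/- For every integer n ≥ 2 and every real number a with 0 ≤ a < 1, one has the identity (1−a)^{n−1} · Σ_{k=1}^{n−1} ( U_{n−1}((k − n·a)/(1−a)) − U_{n−1}((k − n·a)/(1−a) − 1) ) = (1/(n−1)!) · Σ_{(i,k) ∈ ℤ², 2 ≤ i ≤ n, max(i·a, i−n+1) ≤ k ≤ i−1} (−1)^{n+i} · C(n,i) · (k − i·a)^{n−1}. -/
/-!
Pascal's rule gives `U_m(x) − U_m(x − 1) = (1/m!) Σ_{j=0}^{m+1} (−1)^j C(m+1,j) (x − j)_+^m`.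
Multiplying by `(1 − a)^m` at `x = (k − na)/(1 − a)` turns `(1 − a)(x − j)` into
`k − j − a(n − j)`; the substitution `i = n − j`, `k ↦ k − n + i` then produces the summands
`(−1)^{n+i} C(n,i) (k − ia)_+^{n−1}` over `i − n + 1 ≤ k ≤ i − 1`. The positive part is exactly the
filter `ia ≤ k` (as `n − 1 ≠ 0`), and the terms `i = 0, 1` vanish because there `k ≤ i − 1 ≤ ia`.
-/
open Finset

theorem sum_range_neg_one_pow_mul_choose_succ {R : Type*} [CommRing R] (m : ℕ) (g : ℕ → R) :
    ∑ j ∈ range (m + 2), (-1) ^ j * ((m + 1).choose j : R) * g j =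
      ∑ i ∈ range (m + 1), (-1) ^ i * (m.choose i : R) * (g i - g (i + 1)) := by
  have hshift : ∑ i ∈ range (m + 1), (-1) ^ i * (m.choose i : R) * g i =
      ∑ i ∈ range (m + 1), (-1) ^ (i + 1) * (m.choose (i + 1) : R) * g (i + 1) + g 0 := by
    rw [sum_range_succ' _ m, sum_range_succ (fun i => (-1) ^ (i + 1) * _ * g (i + 1)) m]
    simp
  simp only [mul_sub, sum_sub_distrib, hshift, sum_range_succ' _ (m + 1), Nat.choose_succ_succ',
    Nat.cast_add, pow_succ, add_mul, mul_add, sum_add_distrib, mul_neg, mul_one, neg_mul,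
    sum_neg_distrib, pow_zero, Nat.choose_zero_right, Nat.cast_one, one_mul]
  ring

theorem sum_range_neg_one_pow_mul_choose_reflect {R : Type*} [CommRing R] (n : ℕ) (f : ℕ → R) :
    ∑ j ∈ range (n + 1), (-1) ^ j * (n.choose j : R) * f j =
      ∑ i ∈ range (n + 1), (-1) ^ (n + i) * (n.choose i : R) * f (n - i) := by
  rw [← sum_range_reflect]
  refine sum_congr rfl fun i hi => ?_
  have hin : i ≤ n := Nat.lt_succ_iff.mp (mem_range.mp hi)
  rw [Nat.add_sub_cancel, Nat.choose_symm hin, show n + i = n - i + 2 * i by omega, pow_add,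
    pow_mul, neg_one_sq, one_pow, mul_one]

theorem sum_filter_le_sub_pow {ι R : Type*} [CommRing R] [LinearOrder R] [IsStrictOrderedRing R]
    (s : Finset ι) (f : ι → R) (c : R) {e : ℕ} (he : e ≠ 0) :
    ∑ k ∈ s with c ≤ f k, (f k - c) ^ e = ∑ k ∈ s, max (f k - c) 0 ^ e := by
  rw [sum_filter]
  refine sum_congr rfl fun k _ => ?_
  split_ifs with h
  · rw [max_eq_left (sub_nonneg.mpr h)]
  · rw [max_eq_right (sub_nonpos.mpr (not_le.mp h).le), zero_pow he]

theorem sum_Icc_natCast_add {M : Type*} [AddCommMonoid M] (c : ℤ) (m : ℕ) (f : ℤ → M) :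
    ∑ k ∈ Icc 1 m, f (c + k) = ∑ k ∈ Icc (c + 1) (c + m), f k := by
  refine sum_nbij' (fun k => c + k) (fun k => (k - c).toNat) ?_ ?_ ?_ ?_ fun _ _ => rfl <;>
    intro k hk <;> simp only [mem_Icc] at hk ⊢ <;> omega

theorem sum_Icc_zero_natCast {M : Type*} [AddCommMonoid M] (n : ℕ) (f : ℤ → M) :
    ∑ i ∈ Icc (0 : ℤ) n, f i = ∑ i ∈ range (n + 1), f i := by
  rw [Int.Icc_eq_finset_map, sum_map]
  simp

theorem Ufun_sub_Ufun_sub_one (m : ℕ) (x : ℝ) :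
    Ufun m x - Ufun m (x - 1) =
      1 / m.factorial *
        ∑ j ∈ range (m + 2), (-1) ^ j * ((m + 1).choose j : ℝ) * max (x - j) 0 ^ m := by
  rw [sum_range_neg_one_pow_mul_choose_succ, Ufun, Ufun, ← mul_sub, ← sum_sub_distrib]
  congr 1
  refine sum_congr rfl fun i _ => ?_
  push_cast
  ring_nf

theorem mul_pow_Ufun_sub_Ufun_sub_one (m : ℕ) {c : ℝ} (hc : 0 ≤ c) (x : ℝ) :
    c ^ m * (Ufun m x - Ufun m (x - 1)) =
      1 / m.factorial * ∑ j ∈ range (m + 2), (-1) ^ j * ((m + 1).choose j : ℝ) *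
        max (c * (x - j)) 0 ^ m := by
  rw [Ufun_sub_Ufun_sub_one, mul_left_comm, mul_sum]
  congr 1
  refine sum_congr rfl fun j _ => ?_
  have hmax : max (c * (x - j)) 0 = c * max (x - j) 0 := by
    rw [mul_max_of_nonneg _ _ hc, mul_zero]
  rw [hmax, mul_pow]
  ring

theorem one_sub_pow_mul_sum_Ufun_sub (n : ℕ) (hn : n ≠ 0) {a : ℝ} (ha : a < 1) :
    (1 - a) ^ (n - 1) *
        ∑ k ∈ Icc 1 (n - 1),
          (Ufun (n - 1) (((k : ℝ) - n * a) / (1 - a)) -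
            Ufun (n - 1) (((k : ℝ) - n * a) / (1 - a) - 1)) =
      1 / (n - 1).factorial *
        ∑ i ∈ range (n + 1), (-1) ^ (n + i) * (n.choose i : ℝ) *
          ∑ k ∈ Icc 1 (n - 1), max ((k : ℝ) - (n - i) - i * a) 0 ^ (n - 1) := by
  obtain ⟨m, rfl⟩ : ∃ m, n = m + 1 := ⟨n - 1, by omega⟩
  have h1a : 0 < 1 - a := sub_pos.mpr ha
  simp only [Nat.add_sub_cancel]
  calc _ = ∑ k ∈ Icc 1 m, 1 / m.factorial * ∑ j ∈ range (m + 2), (-1) ^ j *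
          ((m + 1).choose j : ℝ) * max ((k : ℝ) - j - a * ((m + 1 : ℕ) - j)) 0 ^ m := by
        rw [mul_sum]
        refine sum_congr rfl fun k _ => ?_
        rw [mul_pow_Ufun_sub_Ufun_sub_one m h1a.le]
        congr 1
        refine sum_congr rfl fun j _ => ?_
        rw [mul_sub, mul_div_cancel₀ _ h1a.ne']
        push_cast
        ring_nf
    _ = 1 / m.factorial * ∑ j ∈ range (m + 2), (-1) ^ j * ((m + 1).choose j : ℝ) *
          ∑ k ∈ Icc 1 m, max ((k : ℝ) - j - a * ((m + 1 : ℕ) - j)) 0 ^ m := by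
        rw [← mul_sum, sum_comm]
        simp_rw [mul_sum]
    _ = _ := by
        rw [sum_range_neg_one_pow_mul_choose_reflect]
        congr 1
        refine sum_congr rfl fun i hi => ?_
        rw [Nat.cast_sub (Nat.lt_succ_iff.mp (mem_range.mp hi))]
        congr 1
        refine sum_congr rfl fun k _ => ?_
        ring_nf

theorem sum_Icc_sum_filter_eq (n : ℕ) (hn : 2 ≤ n) {a : ℝ} (ha : 0 ≤ a) :
    ∑ i ∈ Icc (2 : ℤ) n,
        ∑ k ∈ (Icc (i - n + 1) (i - 1)).filter (fun k : ℤ => (i : ℝ) * a ≤ (k : ℝ)),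
          (-1 : ℝ) ^ ((n : ℤ) + i) * (n.choose i.toNat : ℝ) * ((k : ℝ) - i * a) ^ (n - 1) =
      ∑ i ∈ range (n + 1), (-1) ^ (n + i) * (n.choose i : ℝ) *
        ∑ k ∈ Icc 1 (n - 1), max ((k : ℝ) - (n - i) - i * a) 0 ^ (n - 1) := by
  have he : n - 1 ≠ 0 := by omega
  set F : ℤ → ℝ := fun i => (-1 : ℝ) ^ ((n : ℤ) + i) * (n.choose i.toNat : ℝ) *
    ∑ k ∈ Icc (i - n + 1) (i - 1), max ((k : ℝ) - i * a) 0 ^ (n - 1)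
  have hvanish : ∀ i ∈ Icc (0 : ℤ) n, i ∉ Icc (2 : ℤ) n → F i = 0 := by
    intro i hi hi2
    simp only [mem_Icc] at hi hi2
    refine mul_eq_zero_of_right _ (sum_eq_zero fun k hk => ?_)
    have hki : (k : ℝ) ≤ i - 1 := by exact_mod_cast (mem_Icc.mp hk).2
    have hi0 : (0 : ℝ) ≤ i := by exact_mod_cast hi.1
    have hi1 : (i : ℝ) ≤ 1 := by exact_mod_cast (by omega : i ≤ 1)
    rw [max_eq_right (by nlinarith), zero_pow he]
  calc _ = ∑ i ∈ Icc (2 : ℤ) n, F i :=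
        sum_congr rfl fun i _ => by rw [← mul_sum, sum_filter_le_sub_pow _ _ _ he]
    _ = ∑ i ∈ Icc (0 : ℤ) n, F i := sum_subset (Icc_subset_Icc_left (by norm_num)) hvanish
    _ = ∑ i ∈ range (n + 1), F i := sum_Icc_zero_natCast n F
    _ = _ := by
        refine sum_congr rfl fun i _ => ?_
        have hup : (i : ℤ) - n + ((n - 1 : ℕ) : ℤ) = i - 1 := by omega
        simp only [F, Int.toNat_natCast, ← Nat.cast_add, zpow_natCast, ← hup,
          ← sum_Icc_natCast_add]
        push_cast
        ring_nf

/-- for `n ≥ 2` and `0 ≤ a < 1`,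
`(1−a)^{n−1} Σ_{k=1}^{n−1} (U_{n−1}((k−na)/(1−a)) − U_{n−1}((k−na)/(1−a) − 1))`
equals `(1/(n−1)!) Σ_{2 ≤ i ≤ n, max(ia, i−n+1) ≤ k ≤ i−1} (−1)^{n+i} C(n,i) (k−ia)^{n−1}`. -/
theorem statement5 (n : ℕ) (hn : 2 ≤ n) (a : ℝ) (ha0 : 0 ≤ a) (ha1 : a < 1) :
    (1 - a) ^ (n - 1) *
        ∑ k ∈ Finset.Icc 1 (n - 1),
          (Ufun (n - 1) (((k : ℝ) - n * a) / (1 - a)) -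
            Ufun (n - 1) (((k : ℝ) - n * a) / (1 - a) - 1)) =
      (1 / ((n - 1).factorial : ℝ)) *
        ∑ i ∈ Finset.Icc (2 : ℤ) (n : ℤ),
          ∑ k ∈ (Finset.Icc (i - (n : ℤ) + 1) (i - 1)).filter
              (fun k : ℤ => (i : ℝ) * a ≤ (k : ℝ)),
            (-1 : ℝ) ^ ((n : ℤ) + i) * (n.choose i.toNat : ℝ) *
              ((k : ℝ) - (i : ℝ) * a) ^ (n - 1) := by
  rw [one_sub_pow_mul_sum_Ufun_sub n (by omega) ha1, sum_Icc_sum_filter_eq n hn ha0]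
end
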